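/- arXiv:1401.0798 — 7 statements merged into one kernel-verified Lean document; each statement's English description precedes it below -/
import Mathlib

section
/- Let n ≥ 1 and let B, A₁, A₂ be symmetric real n×n matrices with B positive definite and A₁, A₂ positive semidefinite. Set A = A₁ + A₂, let τ > 0 and σ ≥ 1/2. If vectors y, y', φ ∈ ℝⁿ satisfy the factorized regionally additive scheme (B + στA₁) B⁻¹ (B + στA₂) ((y' − y)/τ) + A y = φ, then ‖(B + στA₂) y'‖_{B⁻¹} ≤ ‖(B + στA₂) y‖_{B⁻¹} + τ ‖φ‖_{B⁻¹}. -/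
open Matrix

/-- The `B⁻¹`-weighted norm `‖x‖_{B⁻¹} = √(xᵀ B⁻¹ x)`. -/
noncomputable def normBinv {n : ℕ} (B : Matrix (Fin n) (Fin n) ℝ) (x : Fin n → ℝ) : ℝ :=
  Real.sqrt (x ⬝ᵥ B⁻¹ *ᵥ x)

/-!
Write `C = B + στA₂` and `D = B + στA₁`, and let all norms be `‖·‖_{B⁻¹}`. Multiplying the
scheme by `τ B D⁻¹` gives `C y' = (C y - τ B ξ) + τ B ψ` with `D ξ = A y` and `D ψ = φ`, so by
the triangle inequality it suffices that `‖Bψ‖ ≤ ‖Dψ‖` and `‖Cy - τBξ‖ ≤ ‖Cy‖`.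
The first holds because `‖Dψ‖² - ‖Bψ‖² = 2στ ψᵀA₁ψ + (στ)² ‖A₁ψ‖²`.
For the second, `‖Cy - τBξ‖² = ‖Cy‖² - τ (2 ξᵀCy - τ ξᵀBξ)`, and the energy identity
`ξᵀCy = yᵀA₂y + στ ξᵀBξ + (y - στξ)ᵀA₁(y - στξ)` makes the bracket nonnegative as soon as
`τ ≤ 2στ`, i.e. `σ ≥ 1/2`.
-/

theorem Matrix.IsSymm.dotProduct_mulVec_comm {ι R : Type*} [Fintype ι] [CommSemiring R]
    {S : Matrix ι ι R} (hS : S.IsSymm) (x y : ι → R) : x ⬝ᵥ S *ᵥ y = y ⬝ᵥ S *ᵥ x := by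
  conv_lhs => rw [← hS.eq]
  exact dotProduct_transpose_mulVec S x y

theorem Matrix.PosSemidef.dotProduct_mulVec_self_nonneg {ι : Type*} [Fintype ι]
    {M : Matrix ι ι ℝ} (hM : M.PosSemidef) (x : ι → ℝ) : 0 ≤ x ⬝ᵥ M *ᵥ x := by
  simpa using hM.dotProduct_mulVec_nonneg x

theorem mulVec_eq_of_factorized_scheme {ι K : Type*} [Fintype ι] [DecidableEq ι] [Field K]
    {B C D A : Matrix ι ι K} (hB : IsUnit B.det) (hD : IsUnit D.det) {τ : K} (hτ : τ ≠ 0)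
    {y y' φ : ι → K} (h : (D * B⁻¹ * C) *ᵥ ((1 / τ) • (y' - y)) + A *ᵥ y = φ) :
    C *ᵥ y' = (C *ᵥ y - τ • (B *ᵥ D⁻¹ *ᵥ A *ᵥ y)) + τ • (B *ᵥ D⁻¹ *ᵥ φ) := by
  have hBD : B * D⁻¹ * (D * B⁻¹ * C) = C := by
    simp only [Matrix.mul_assoc, nonsing_inv_mul_cancel_left _ _ hD,
      mul_nonsing_inv_cancel_left _ _ hB]
  have h' := congrArg (fun v => τ • (B * D⁻¹) *ᵥ v) (eq_sub_of_add_eq h)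
  simp only [mulVec_mulVec, hBD, mulVec_smul, smul_smul, mul_one_div_cancel hτ, one_smul] at h'
  rw [mulVec_sub, sub_eq_iff_eq_add'] at h'
  rw [h', ← mulVec_mulVec, mulVec_sub, mulVec_sub, smul_sub]
  abel

theorem dotProduct_add_smul_mulVec_of_add_smul_mulVec_eq {ι R : Type*} [Fintype ι] [CommRing R]
    {B A₁ A₂ : Matrix ι ι R} (hB : B.IsSymm) (hA₁ : A₁.IsSymm) {c : R} {y ξ : ι → R}
    (hξ : (B + c • A₁) *ᵥ ξ = (A₁ + A₂) *ᵥ y) :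
    ξ ⬝ᵥ (B + c • A₂) *ᵥ y
      = y ⬝ᵥ A₂ *ᵥ y + c * (ξ ⬝ᵥ B *ᵥ ξ) + (y - c • ξ) ⬝ᵥ A₁ *ᵥ (y - c • ξ) := by
  have hξξ := congrArg (ξ ⬝ᵥ ·) hξ
  have hyξ := congrArg (y ⬝ᵥ ·) hξ
  simp only [add_mulVec, smul_mulVec, mulVec_sub, mulVec_smul, dotProduct_add, dotProduct_sub,
    sub_dotProduct, dotProduct_smul, smul_dotProduct, smul_eq_mul] at hξξ hyξ ⊢
  rw [hB.dotProduct_mulVec_comm y, hA₁.dotProduct_mulVec_comm y] at hyξ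
  rw [hA₁.dotProduct_mulVec_comm y ξ]
  linear_combination hyξ - c * hξξ

section normBinv

variable {n : ℕ} {B : Matrix (Fin n) (Fin n) ℝ}

theorem normBinv_eq_norm (hB : B.PosSemidef) (x : Fin n → ℝ) :
    normBinv B x = @Norm.norm _ (B⁻¹.toSeminormedAddCommGroup hB.inv).toNorm x := by
  rw [normBinv, dotProduct_comm]
  exact (@norm_eq_sqrt_re_inner ℝ _ _ (B⁻¹.toSeminormedAddCommGroup hB.inv)
    (B⁻¹.toInnerProductSpace hB.inv) x).symm

theorem normBinv_add_le (hB : B.PosSemidef) (x y : Fin n → ℝ) :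
    normBinv B (x + y) ≤ normBinv B x + normBinv B y := by
  simpa only [normBinv_eq_norm hB] using
    @norm_add_le _ (B⁻¹.toSeminormedAddCommGroup hB.inv).toSeminormedAddGroup x y

theorem normBinv_smul (B : Matrix (Fin n) (Fin n) ℝ) {c : ℝ} (hc : 0 ≤ c) (x : Fin n → ℝ) :
    normBinv B (c • x) = c * normBinv B x := by
  rw [normBinv, normBinv, mulVec_smul, dotProduct_smul, smul_dotProduct, smul_eq_mul, smul_eq_mul,
    ← mul_assoc, Real.sqrt_mul (mul_nonneg hc hc), Real.sqrt_mul_self hc]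

theorem normBinv_le_normBinv_iff (B : Matrix (Fin n) (Fin n) ℝ) (x y : Fin n → ℝ) :
    normBinv B x ≤ normBinv B y ↔ normBinv B x ^ 2 ≤ normBinv B y ^ 2 :=
  (pow_le_pow_iff_left₀ (Real.sqrt_nonneg _) (Real.sqrt_nonneg _) two_ne_zero).symm

theorem normBinv_sq (hB : B.PosSemidef) (x : Fin n → ℝ) :
    normBinv B x ^ 2 = x ⬝ᵥ B⁻¹ *ᵥ x :=
  Real.sq_sqrt (hB.inv.dotProduct_mulVec_self_nonneg x)

theorem normBinv_sq_add_mulVec (hB : B.PosDef) (u v : Fin n → ℝ) :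
    normBinv B (u + B *ᵥ v) ^ 2 = normBinv B u ^ 2 + 2 * (v ⬝ᵥ u) + v ⬝ᵥ B *ᵥ v := by
  have hBB : B⁻¹ *ᵥ B *ᵥ v = v := by
    rw [mulVec_mulVec, nonsing_inv_mul _ hB.det_pos.ne'.isUnit, one_mulVec]
  have hsymm : B⁻¹.IsSymm := by simpa using hB.inv.isHermitian
  rw [normBinv_sq hB.posSemidef, normBinv_sq hB.posSemidef, mulVec_add, hBB, add_dotProduct,
    dotProduct_add, dotProduct_add, hsymm.dotProduct_mulVec_comm (B *ᵥ v), hBB,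
    dotProduct_comm u v, dotProduct_comm (B *ᵥ v) v]
  ring

theorem normBinv_mulVec_self_sq (hB : B.PosDef) (v : Fin n → ℝ) :
    normBinv B (B *ᵥ v) ^ 2 = v ⬝ᵥ B *ᵥ v := by
  simpa [normBinv_sq hB.posSemidef] using normBinv_sq_add_mulVec hB 0 v

theorem normBinv_mulVec_le_normBinv_add_mulVec (hB : B.PosDef)
    {P : Matrix (Fin n) (Fin n) ℝ} (hP : P.PosSemidef) (ψ : Fin n → ℝ) :
    normBinv B (B *ᵥ ψ) ≤ normBinv B ((B + P) *ᵥ ψ) := by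
  rw [normBinv_le_normBinv_iff, add_mulVec, add_comm, normBinv_sq_add_mulVec hB,
    normBinv_mulVec_self_sq hB]
  linarith [hP.dotProduct_mulVec_self_nonneg ψ, sq_nonneg (normBinv B (P *ᵥ ψ))]

theorem normBinv_sub_smul_mulVec_le (hB : B.PosDef)
    {A₁ A₂ : Matrix (Fin n) (Fin n) ℝ} (hA₁ : A₁.PosSemidef) (hA₂ : A₂.PosSemidef)
    {c τ : ℝ} (hτ : 0 ≤ τ) (hτc : τ ≤ 2 * c) {y ξ : Fin n → ℝ}
    (hξ : (B + c • A₁) *ᵥ ξ = (A₁ + A₂) *ᵥ y) :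
    normBinv B ((B + c • A₂) *ᵥ y - τ • (B *ᵥ ξ)) ≤ normBinv B ((B + c • A₂) *ᵥ y) := by
  have henergy := dotProduct_add_smul_mulVec_of_add_smul_mulVec_eq
    (by simpa using hB.isHermitian) (by simpa using hA₁.isHermitian) hξ
  rw [normBinv_le_normBinv_iff, ← mulVec_smul, sub_eq_add_neg, ← mulVec_neg,
    normBinv_sq_add_mulVec hB]
  simp only [neg_dotProduct, mulVec_neg, dotProduct_neg, smul_dotProduct, mulVec_smul,
    dotProduct_smul, smul_eq_mul, henergy]
  nlinarith [hA₂.dotProduct_mulVec_self_nonneg y, hA₁.dotProduct_mulVec_self_nonneg (y - c • ξ),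
    mul_nonneg hτ (mul_nonneg (sub_nonneg.2 hτc) (hB.posSemidef.dotProduct_mulVec_self_nonneg ξ))]

end normBinv

theorem factorized_scheme_one_step_stability_general
    {n : ℕ}
    (B A₁ A₂ : Matrix (Fin n) (Fin n) ℝ)
    (hB : B.PosDef) (hA₁ : A₁.PosSemidef) (hA₂ : A₂.PosSemidef)
    (A : Matrix (Fin n) (Fin n) ℝ) (hA : A = A₁ + A₂)
    (τ σ : ℝ) (hτ : 0 < τ) (hσ : 1 / 2 ≤ σ)
    (y y' φ : Fin n → ℝ)
    (hscheme : ((B + (σ * τ) • A₁) * B⁻¹ * (B + (σ * τ) • A₂)) *ᵥ ((1 / τ) • (y' - y))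
        + A *ᵥ y = φ) :
    normBinv B ((B + (σ * τ) • A₂) *ᵥ y')
      ≤ normBinv B ((B + (σ * τ) • A₂) *ᵥ y) + τ * normBinv B φ := by
  subst hA
  have hτσ : τ ≤ 2 * (σ * τ) := by nlinarith
  have hστA₁ : ((σ * τ) • A₁).PosSemidef := hA₁.smul (by positivity)
  have hD : (B + (σ * τ) • A₁).PosDef := hB.add_posSemidef hστA₁
  have hDD : ∀ v, (B + (σ * τ) • A₁) *ᵥ (B + (σ * τ) • A₁)⁻¹ *ᵥ v = v := fun v => by
    rw [mulVec_mulVec, mul_nonsing_inv _ hD.det_pos.ne'.isUnit, one_mulVec]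
  rw [mulVec_eq_of_factorized_scheme hB.det_pos.ne'.isUnit hD.det_pos.ne'.isUnit hτ.ne' hscheme]
  refine (normBinv_add_le hB.posSemidef _ _).trans ?_
  rw [normBinv_smul B hτ.le]
  gcongr
  · exact normBinv_sub_smul_mulVec_le hB hA₁ hA₂ hτ.le hτσ (hDD _)
  · simpa only [hDD] using
      normBinv_mulVec_le_normBinv_add_mulVec hB hστA₁ ((B + (σ * τ) • A₁)⁻¹ *ᵥ φ)

theorem factorized_scheme_one_step_stability
    {n : ℕ} (hn : 1 ≤ n)
    (B A₁ A₂ : Matrix (Fin n) (Fin n) ℝ)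
    (hB : B.PosDef) (hA₁ : A₁.PosSemidef) (hA₂ : A₂.PosSemidef)
    (A : Matrix (Fin n) (Fin n) ℝ) (hA : A = A₁ + A₂)
    (τ σ : ℝ) (hτ : 0 < τ) (hσ : 1 / 2 ≤ σ)
    (y y' φ : Fin n → ℝ)
    (hscheme : ((B + (σ * τ) • A₁) * B⁻¹ * (B + (σ * τ) • A₂)) *ᵥ ((1 / τ) • (y' - y))
        + A *ᵥ y = φ) :
    normBinv B ((B + (σ * τ) • A₂) *ᵥ y')
      ≤ normBinv B ((B + (σ * τ) • A₂) *ᵥ y) + τ * normBinv B φ :=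
  factorized_scheme_one_step_stability_general B A₁ A₂ hB hA₁ hA₂ A hA τ σ hτ hσ y y' φ hscheme
end

section
/- Let n ≥ 1 and let Ã₁, Ã₂ be symmetric positive semidefinite real n×n matrices, let Ã = Ã₁ + Ã₂, let τ > 0 and σ ≥ 1/2. If vectors v, v', φ̃ ∈ ℝⁿ satisfy (I + στÃ₁)(I + στÃ₂)((v' − v)/τ) + Ã v = φ̃, then ‖(I + στÃ₂) v'‖ ≤ ‖(I + στÃ₂) v‖ + τ ‖φ̃‖, where ‖·‖ is the Euclidean norm on ℝⁿ. -/
/-!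
Write `Bᵢ = 1 + στAᵢ`, `u = B₂v` and `w = B₂v'`. Since `στA = (B₁ - 1) + (B₂ - 1)`, the scheme says
`σ B₁ w = σ B₁ u + (2v - u) - B₁ v + στ φ`. Solving `B₁ y₁ = 2v - u = (1 - στA₂)v` and `B₁ y₂ = φ`,
and using `(1 - στA₁) y₁ = 2y₁ - B₁ y₁`, gives `σ w = (σ - 1/2) u + 1/2 (1 - στA₁) y₁ + στ y₂`.
For `A` positive semidefinite and `c ≥ 0`, expanding `‖(1 ± cA)y‖²` shows `‖y‖ ≤ ‖(1 + cA)y‖` and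
`‖(1 - cA)y‖ ≤ ‖(1 + cA)y‖`, so the three vectors on the right have norms at most `‖u‖`, `‖u‖` and `‖φ‖`;
as `σ - 1/2 ≥ 0`, the triangle inequality gives `σ‖w‖ ≤ σ‖u‖ + στ‖φ‖`.
-/

open Matrix

/-- The Euclidean norm of a vector in `ℝⁿ`. -/
noncomputable def euclNorm {n : ℕ} (x : Fin n → ℝ) : ℝ :=
  Real.sqrt (x ⬝ᵥ x)

section EuclNorm

variable {n : ℕ}

lemma euclNorm_eq_norm_toLp (x : Fin n → ℝ) : euclNorm x = ‖WithLp.toLp 2 x‖ := by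
  rw [euclNorm, EuclideanSpace.norm_eq]
  simp [dotProduct, sq]

lemma euclNorm_le_euclNorm_of_dotProduct_self_le {x y : Fin n → ℝ} (h : x ⬝ᵥ x ≤ y ⬝ᵥ y) : euclNorm x ≤ euclNorm y :=
  Real.sqrt_le_sqrt h

lemma euclNorm_add_le (x y : Fin n → ℝ) : euclNorm (x + y) ≤ euclNorm x + euclNorm y := by
  simpa only [euclNorm_eq_norm_toLp, WithLp.toLp_add] using norm_add_le _ _

lemma euclNorm_smul (a : ℝ) (x : Fin n → ℝ) : euclNorm (a • x) = |a| * euclNorm x := by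
  rw [euclNorm_eq_norm_toLp, euclNorm_eq_norm_toLp, WithLp.toLp_smul, norm_smul, Real.norm_eq_abs]

lemma euclNorm_smul_add_smul_add_smul_le {a b c : ℝ} (ha : 0 ≤ a) (hb : 0 ≤ b) (hc : 0 ≤ c)
    (x y z : Fin n → ℝ) :
    euclNorm (a • x + b • y + c • z) ≤ a * euclNorm x + b * euclNorm y + c * euclNorm z := by
  calc euclNorm (a • x + b • y + c • z)
      ≤ euclNorm (a • x) + euclNorm (b • y) + euclNorm (c • z) :=
        (euclNorm_add_le _ _).trans (add_le_add_left (euclNorm_add_le _ _) _)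
    _ = a * euclNorm x + b * euclNorm y + c * euclNorm z := by
        rw [euclNorm_smul, euclNorm_smul, euclNorm_smul, abs_of_nonneg ha, abs_of_nonneg hb,
          abs_of_nonneg hc]

end EuclNorm

namespace Matrix

variable {ι : Type*} [Fintype ι]

lemma dotProduct_self_nonneg (x : ι → ℝ) : 0 ≤ x ⬝ᵥ x := by
  simpa using dotProduct_self_star_nonneg x

variable [DecidableEq ι]

section OneAddSmul

variable {A : Matrix ι ι ℝ} (hA : A.PosSemidef) {c : ℝ} (hc : 0 ≤ c)
include hA hc

lemma dotProduct_self_le_one_add_smul_mulVec (y : ι → ℝ) :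
    y ⬝ᵥ y ≤ ((1 + c • A) *ᵥ y) ⬝ᵥ ((1 + c • A) *ᵥ y) := by
  have hAy : 0 ≤ y ⬝ᵥ A *ᵥ y := by simpa using hA.dotProduct_mulVec_nonneg y
  simp only [add_mulVec, one_mulVec, smul_mulVec, add_dotProduct, dotProduct_add,
    smul_dotProduct, dotProduct_smul, smul_eq_mul, dotProduct_comm (A *ᵥ y) y]
  nlinarith [mul_nonneg hc hAy, mul_nonneg (mul_nonneg hc hc) (dotProduct_self_nonneg (A *ᵥ y))]

lemma one_sub_smul_mulVec_dotProduct_self_le (y : ι → ℝ) :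
    ((1 - c • A) *ᵥ y) ⬝ᵥ ((1 - c • A) *ᵥ y) ≤ ((1 + c • A) *ᵥ y) ⬝ᵥ ((1 + c • A) *ᵥ y) := by
  have hAy : 0 ≤ y ⬝ᵥ A *ᵥ y := by simpa using hA.dotProduct_mulVec_nonneg y
  simp only [add_mulVec, sub_mulVec, one_mulVec, smul_mulVec, add_dotProduct, dotProduct_add,
    sub_dotProduct, dotProduct_sub, smul_dotProduct, dotProduct_smul, smul_eq_mul,
    dotProduct_comm (A *ᵥ y) y]
  nlinarith

lemma injective_one_add_smul_mulVec : Function.Injective (1 + c • A).mulVec := by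
  intro x y hxy
  rw [← sub_eq_zero, ← dotProduct_self_eq_zero]
  refine le_antisymm ?_ (dotProduct_self_nonneg _)
  simpa [mulVec_sub, hxy] using dotProduct_self_le_one_add_smul_mulVec hA hc (x - y)

lemma surjective_one_add_smul_mulVec : Function.Surjective (1 + c • A).mulVec :=
  mulVec_surjective_iff_isUnit.mpr (mulVec_injective_iff_isUnit.mp
    (injective_one_add_smul_mulVec hA hc))

end OneAddSmul

lemma factorized_scheme_mulVec_eq {A₁ A₂ : Matrix ι ι ℝ} {τ σ : ℝ} (hτ : τ ≠ 0)
    {v v' φ y₁ y₂ : ι → ℝ}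
    (hscheme : ((1 + (σ * τ) • A₁) * (1 + (σ * τ) • A₂)) *ᵥ ((1 / τ) • (v' - v))
        + (A₁ + A₂) *ᵥ v = φ)
    (hy₁ : (1 + (σ * τ) • A₁) *ᵥ y₁ = (1 - (σ * τ) • A₂) *ᵥ v)
    (hy₂ : (1 + (σ * τ) • A₁) *ᵥ y₂ = φ) :
    (1 + (σ * τ) • A₁) *ᵥ (σ • (1 + (σ * τ) • A₂) *ᵥ v') =
      (1 + (σ * τ) • A₁) *ᵥ ((σ - 1 / 2) • (1 + (σ * τ) • A₂) *ᵥ v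
        + (1 / 2 : ℝ) • (1 - (σ * τ) • A₁) *ᵥ y₁ + (σ * τ) • y₂) := by
  set c := σ * τ
  have hstep : ((1 + c • A₁) * (1 + c • A₂)) *ᵥ v' =
      ((1 + c • A₁) * (1 + c • A₂)) *ᵥ v + τ • (φ - (A₁ + A₂) *ᵥ v) := by
    rw [← hscheme, add_sub_cancel_right, mulVec_smul, smul_smul, mul_one_div_cancel hτ, one_smul,
      mulVec_sub, add_sub_cancel]
  have hy₁' : (1 - c • A₁) *ᵥ y₁ = (2 : ℝ) • y₁ - (1 + c • A₁) *ᵥ y₁ := by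
    simp only [sub_mulVec, add_mulVec, one_mulVec]
    module
  rw [mulVec_smul, mulVec_mulVec, hstep, hy₁', mulVec_add, mulVec_add, mulVec_smul, mulVec_smul,
    mulVec_smul, mulVec_sub, mulVec_smul, hy₁, hy₂, mulVec_mulVec]
  simp only [add_mul, mul_add, one_mul, mul_one, Matrix.smul_mul, Matrix.mul_smul, smul_smul,
    add_mulVec, sub_mulVec, one_mulVec, smul_mulVec, mulVec_sub, mulVec_smul,
    mulVec_mulVec, c]
  module

end Matrix

section OneAddSmul

variable {n : ℕ} {A : Matrix (Fin n) (Fin n) ℝ} (hA : A.PosSemidef) {c : ℝ} (hc : 0 ≤ c)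
include hA hc

lemma euclNorm_le_euclNorm_one_add_smul_mulVec (y : Fin n → ℝ) :
    euclNorm y ≤ euclNorm ((1 + c • A) *ᵥ y) :=
  euclNorm_le_euclNorm_of_dotProduct_self_le (dotProduct_self_le_one_add_smul_mulVec hA hc y)

lemma euclNorm_one_sub_smul_mulVec_le (y : Fin n → ℝ) :
    euclNorm ((1 - c • A) *ᵥ y) ≤ euclNorm ((1 + c • A) *ᵥ y) :=
  euclNorm_le_euclNorm_of_dotProduct_self_le (one_sub_smul_mulVec_dotProduct_self_le hA hc y)

end OneAddSmul

theorem symmetrized_factorized_scheme_one_step_stability_general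
    {n : ℕ}
    (A₁ A₂ : Matrix (Fin n) (Fin n) ℝ)
    (hA₁ : A₁.PosSemidef) (hA₂ : A₂.PosSemidef)
    (A : Matrix (Fin n) (Fin n) ℝ) (hA : A = A₁ + A₂)
    (τ σ : ℝ) (hτ : 0 < τ) (hσ : 1 / 2 ≤ σ)
    (v v' φ : Fin n → ℝ)
    (hscheme : ((1 + (σ * τ) • A₁) * (1 + (σ * τ) • A₂)) *ᵥ ((1 / τ) • (v' - v))
        + A *ᵥ v = φ) :
    euclNorm ((1 + (σ * τ) • A₂) *ᵥ v')
      ≤ euclNorm ((1 + (σ * τ) • A₂) *ᵥ v) + τ * euclNorm φ := by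
  subst hA
  have hσ₀ : 0 < σ := by linarith
  have hc : 0 ≤ σ * τ := by positivity
  obtain ⟨y₁, hy₁⟩ := surjective_one_add_smul_mulVec hA₁ hc ((1 - (σ * τ) • A₂) *ᵥ v)
  obtain ⟨y₂, hy₂⟩ := surjective_one_add_smul_mulVec hA₁ hc φ
  have hw := injective_one_add_smul_mulVec hA₁ hc
    (factorized_scheme_mulVec_eq hτ.ne' hscheme hy₁ hy₂)
  set u := (1 + (σ * τ) • A₂) *ᵥ v
  have hy₁_le : euclNorm ((1 - (σ * τ) • A₁) *ᵥ y₁) ≤ euclNorm u :=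
    calc euclNorm ((1 - (σ * τ) • A₁) *ᵥ y₁)
        ≤ euclNorm ((1 - (σ * τ) • A₂) *ᵥ v) := hy₁ ▸ euclNorm_one_sub_smul_mulVec_le hA₁ hc y₁
      _ ≤ euclNorm u := euclNorm_one_sub_smul_mulVec_le hA₂ hc v
  have hy₂_le : euclNorm y₂ ≤ euclNorm φ := hy₂ ▸ euclNorm_le_euclNorm_one_add_smul_mulVec hA₁ hc y₂
  refine le_of_mul_le_mul_left ?_ hσ₀
  calc σ * euclNorm ((1 + (σ * τ) • A₂) *ᵥ v')
      = euclNorm (σ • (1 + (σ * τ) • A₂) *ᵥ v') := by rw [euclNorm_smul, abs_of_pos hσ₀]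
    _ ≤ (σ - 1 / 2) * euclNorm u + 1 / 2 * euclNorm ((1 - (σ * τ) • A₁) *ᵥ y₁)
          + σ * τ * euclNorm y₂ := by
        rw [hw]
        exact euclNorm_smul_add_smul_add_smul_le (by linarith) (by norm_num) hc _ _ _
    _ ≤ (σ - 1 / 2) * euclNorm u + 1 / 2 * euclNorm u + σ * τ * euclNorm φ := by gcongr
    _ = σ * (euclNorm u + τ * euclNorm φ) := by ring

theorem symmetrized_factorized_scheme_one_step_stability
    {n : ℕ} (hn : 1 ≤ n)
    (A₁ A₂ : Matrix (Fin n) (Fin n) ℝ)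
    (hA₁ : A₁.PosSemidef) (hA₂ : A₂.PosSemidef)
    (A : Matrix (Fin n) (Fin n) ℝ) (hA : A = A₁ + A₂)
    (τ σ : ℝ) (hτ : 0 < τ) (hσ : 1 / 2 ≤ σ)
    (v v' φ : Fin n → ℝ)
    (hscheme : ((1 + (σ * τ) • A₁) * (1 + (σ * τ) • A₂)) *ᵥ ((1 / τ) • (v' - v))
        + A *ᵥ v = φ) :
    euclNorm ((1 + (σ * τ) • A₂) *ᵥ v')
      ≤ euclNorm ((1 + (σ * τ) • A₂) *ᵥ v) + τ * euclNorm φ :=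
  symmetrized_factorized_scheme_one_step_stability_general A₁ A₂ hA₁ hA₂ A hA τ σ hτ hσ v v' φ
    hscheme
end

section
/- Let n ≥ 1, let A₁, A₂ be symmetric positive semidefinite real n×n matrices, let τ > 0 and σ ≥ 1/2. Then the matrices I + στA₁ and I + στA₂ are invertible and the transition matrix T = I − τ (I + στA₁)⁻¹ (A₁ + A₂) (I + στA₂)⁻¹ satisfies ‖T‖ ≤ 1, where ‖·‖ is the operator norm induced by the Euclidean norm on ℝⁿ. -/
/-!
With `a = σ τ` and `θ = 1 / (2 σ) ∈ (0, 1]`, the identity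
`(I - a A₁)(I - a A₂) = (I + a A₁)(I + a A₂) - 2 a (A₁ + A₂)` gives
`T = (1 - θ) I + θ C(a A₁) C(a A₂)`, where `C(A) = (I + A)⁻¹ (I - A)` is the Cayley transform.
For positive semidefinite `A`, `C(A)` is a contraction: `‖(I - A) y‖ ≤ ‖(I + A) y‖` because
`⟪y, A y⟫ ≥ 0`. So `T` is a convex combination of contractions.
-/

open Matrix RealInnerProductSpace

theorem norm_sub_le_norm_add_of_inner_nonneg {E : Type*} [NormedAddCommGroup E]
    [InnerProductSpace ℝ E] {x y : E} (h : 0 ≤ ⟪x, y⟫) : ‖x - y‖ ≤ ‖x + y‖ := by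
  rw [← sq_le_sq₀ (norm_nonneg _) (norm_nonneg _), norm_sub_sq_real, norm_add_sq_real]
  linarith

namespace Matrix

variable {ι : Type*} [Fintype ι] [DecidableEq ι]

section CommRing

variable {R : Type*} [CommRing R]

noncomputable def cayley (A : Matrix ι ι R) : Matrix ι ι R := (1 + A)⁻¹ * (1 - A)

theorem cayley_eq_mul_inv {A : Matrix ι ι R} (hA : IsUnit (1 + A)) :
    cayley A = (1 - A) * (1 + A)⁻¹ := by
  have hcomm : Commute (1 + A) (1 - A) :=
    (Commute.one_right _).sub_right ((Commute.one_left A).add_left (Commute.refl A))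
  have := hcomm.units_inv_left (u := hA.unit)
  rw [cayley]
  simpa [Matrix.coe_units_inv] using this.eq

theorem cayley_mul_cayley {X Y : Matrix ι ι R} (hX : IsUnit (1 + X)) (hY : IsUnit (1 + Y)) :
    cayley X * cayley Y = 1 - (2 : R) • ((1 + X)⁻¹ * (X + Y) * (1 + Y)⁻¹) := by
  have hXY : (1 - X) * (1 - Y) = (1 + X) * (1 + Y) - (2 : R) • (X + Y) := by
    simp only [sub_mul, mul_sub, add_mul, mul_add, one_mul, mul_one, smul_add, two_smul]
    abel
  calc cayley X * cayley Y = (1 + X)⁻¹ * ((1 - X) * (1 - Y)) * (1 + Y)⁻¹ := by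
        rw [cayley_eq_mul_inv hY, cayley]; simp only [mul_assoc]
    _ = (1 + X)⁻¹ * ((1 + X) * (1 + Y) - (2 : R) • (X + Y)) * (1 + Y)⁻¹ := by rw [hXY]
    _ = 1 - (2 : R) • ((1 + X)⁻¹ * (X + Y) * (1 + Y)⁻¹) := by
        rw [mul_sub, sub_mul, ← mul_assoc, nonsing_inv_mul _ ((isUnit_iff_isUnit_det _).mp hX),
          one_mul, mul_nonsing_inv _ ((isUnit_iff_isUnit_det _).mp hY), Matrix.mul_smul,
          Matrix.smul_mul]

end CommRing

namespace PosSemidef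

variable {A : Matrix ι ι ℝ}

theorem inner_toEuclideanCLM_self_nonneg (hA : A.PosSemidef) (x : EuclideanSpace ℝ ι) :
    0 ≤ ⟪x, toEuclideanCLM (𝕜 := ℝ) A x⟫ :=
  (isPositive_toEuclideanLin_iff.mpr hA).re_inner_nonneg_right x

theorem norm_toEuclideanCLM_one_sub_apply_le (hA : A.PosSemidef) (x : EuclideanSpace ℝ ι) :
    ‖toEuclideanCLM (𝕜 := ℝ) (1 - A) x‖ ≤ ‖toEuclideanCLM (𝕜 := ℝ) (1 + A) x‖ := by
  simpa [map_sub, map_add] using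
    norm_sub_le_norm_add_of_inner_nonneg (hA.inner_toEuclideanCLM_self_nonneg x)

theorem norm_toEuclideanCLM_cayley_le_one (hA : A.PosSemidef) :
    ‖toEuclideanCLM (𝕜 := ℝ) (cayley A)‖ ≤ 1 := by
  have hB : IsUnit (1 + A) := (PosDef.one.add_posSemidef hA).isUnit
  refine ContinuousLinearMap.opNorm_le_bound _ zero_le_one fun x => ?_
  set y := toEuclideanCLM (𝕜 := ℝ) (1 + A)⁻¹ x with hy_def
  have hy : toEuclideanCLM (𝕜 := ℝ) (1 + A) y = x := by
    rw [hy_def, ← ContinuousLinearMap.comp_apply, ← ContinuousLinearMap.mul_def, ← map_mul,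
      Matrix.mul_nonsing_inv _ ((isUnit_iff_isUnit_det _).mp hB), map_one,
      one_apply_eq_self]
  calc ‖toEuclideanCLM (𝕜 := ℝ) (cayley A) x‖ = ‖toEuclideanCLM (𝕜 := ℝ) (1 - A) y‖ := by
        rw [cayley_eq_mul_inv hB, map_mul, ContinuousLinearMap.mul_def,
          ContinuousLinearMap.comp_apply]
    _ ≤ ‖toEuclideanCLM (𝕜 := ℝ) (1 + A) y‖ := hA.norm_toEuclideanCLM_one_sub_apply_le y
    _ = 1 * ‖x‖ := by rw [hy, one_mul]

end PosSemidef

end Matrix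

theorem transition_matrix_contraction_general
    {n : ℕ}
    (A₁ A₂ : Matrix (Fin n) (Fin n) ℝ)
    (hA₁ : A₁.PosSemidef) (hA₂ : A₂.PosSemidef)
    (τ σ : ℝ) (hτ : 0 < τ) (hσ : 1 / 2 ≤ σ) :
    IsUnit (1 + (σ * τ) • A₁) ∧ IsUnit (1 + (σ * τ) • A₂) ∧
      ‖Matrix.toEuclideanCLM (𝕜 := ℝ) (n := Fin n)
          (1 - τ • ((1 + (σ * τ) • A₁)⁻¹ * (A₁ + A₂) * (1 + (σ * τ) • A₂)⁻¹))‖ ≤ 1 := by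
  have hστ : 0 ≤ σ * τ := mul_nonneg (by linarith) hτ.le
  have hX₁ := hA₁.smul hστ
  have hX₂ := hA₂.smul hστ
  have hB₁ : IsUnit (1 + (σ * τ) • A₁) := (PosDef.one.add_posSemidef hX₁).isUnit
  have hB₂ : IsUnit (1 + (σ * τ) • A₂) := (PosDef.one.add_posSemidef hX₂).isUnit
  refine ⟨hB₁, hB₂, ?_⟩
  obtain ⟨θ, hθ₀, hθ₁, hθ⟩ : ∃ θ : ℝ, 0 ≤ θ ∧ θ ≤ 1 ∧ θ * (2 * (σ * τ)) = τ :=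
    ⟨(2 * σ)⁻¹, by positivity, inv_le_one_of_one_le₀ (by linarith), by field_simp⟩
  have hT : 1 - τ • ((1 + (σ * τ) • A₁)⁻¹ * (A₁ + A₂) * (1 + (σ * τ) • A₂)⁻¹) =
      (1 - θ) • 1 + θ • (cayley ((σ * τ) • A₁) * cayley ((σ * τ) • A₂)) := by
    rw [cayley_mul_cayley hB₁ hB₂, ← smul_add, Matrix.mul_smul, Matrix.smul_mul]
    linear_combination (norm := module)
      hθ • ((1 + (σ * τ) • A₁)⁻¹ * (A₁ + A₂) * (1 + (σ * τ) • A₂)⁻¹)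
  have hK : ‖toEuclideanCLM (𝕜 := ℝ) (cayley ((σ * τ) • A₁)) *
      toEuclideanCLM (𝕜 := ℝ) (cayley ((σ * τ) • A₂))‖ ≤ 1 :=
    (norm_mul_le _ _).trans (mul_le_one₀ hX₁.norm_toEuclideanCLM_cayley_le_one (norm_nonneg _)
      hX₂.norm_toEuclideanCLM_cayley_le_one)
  rw [hT, map_add, map_smul, map_smul, map_mul, map_one]
  have hconv := convex_closedBall (0 : EuclideanSpace ℝ (Fin n) →L[ℝ] EuclideanSpace ℝ (Fin n)) 1
    (mem_closedBall_zero_iff.mpr ContinuousLinearMap.norm_id_le) (mem_closedBall_zero_iff.mpr hK)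
    (sub_nonneg.mpr hθ₁) hθ₀ (sub_add_cancel _ _)
  exact mem_closedBall_zero_iff.mp hconv

theorem transition_matrix_contraction
    {n : ℕ} (hn : 1 ≤ n)
    (A₁ A₂ : Matrix (Fin n) (Fin n) ℝ)
    (hA₁ : A₁.PosSemidef) (hA₂ : A₂.PosSemidef)
    (τ σ : ℝ) (hτ : 0 < τ) (hσ : 1 / 2 ≤ σ) :
    IsUnit (1 + (σ * τ) • A₁) ∧ IsUnit (1 + (σ * τ) • A₂) ∧
      ‖Matrix.toEuclideanCLM (𝕜 := ℝ) (n := Fin n)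
          (1 - τ • ((1 + (σ * τ) • A₁)⁻¹ * (A₁ + A₂) * (1 + (σ * τ) • A₂)⁻¹))‖ ≤ 1 :=
  transition_matrix_contraction_general A₁ A₂ hA₁ hA₂ τ σ hτ hσ
end

section
/- Let n ≥ 1, let B be an invertible real n×n matrix, let A₁, A₂ be real n×n matrices, and let τ ≠ 0 and σ ∈ ℝ. Suppose vectors y, z, y', φ ∈ ℝⁿ satisfy the two-stage scheme B((z − y)/τ) + A₁(σ z + (1−σ) y) + A₂ y = φ and B((y' − y)/τ) + A₁(σ z + (1−σ) y) + A₂(σ y' + (1−σ) y) = φ. Then (B + στA₁) B⁻¹ (B + στA₂)((y' − y)/τ) + (A₁ + A₂) y = φ. -/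
open Matrix

theorem two_stage_scheme_factorized_form
    {n : ℕ} (hn : 1 ≤ n)
    (B : Matrix (Fin n) (Fin n) ℝ) (hB : IsUnit B)
    (A₁ A₂ : Matrix (Fin n) (Fin n) ℝ)
    (τ σ : ℝ) (hτ : τ ≠ 0)
    (y z y' φ : Fin n → ℝ)
    (hstage1 : B *ᵥ ((1 / τ) • (z - y)) + A₁ *ᵥ (σ • z + (1 - σ) • y) + A₂ *ᵥ y = φ)
    (hstage2 : B *ᵥ ((1 / τ) • (y' - y)) + A₁ *ᵥ (σ • z + (1 - σ) • y)
        + A₂ *ᵥ (σ • y' + (1 - σ) • y) = φ) :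
    ((B + (σ * τ) • A₁) * B⁻¹ * (B + (σ * τ) • A₂)) *ᵥ ((1 / τ) • (y' - y))
      + (A₁ + A₂) *ᵥ y = φ := by
  set u := (1 / τ) • (z - y) with hu
  set v := (1 / τ) • (y' - y) with hv
  have hz : σ • z + (1 - σ) • y = (σ * τ) • u + y := by
    rw [hu, smul_smul]
    have : σ * τ * (1 / τ) = σ := by field_simp
    rw [this]; module
  have hy' : σ • y' + (1 - σ) • y = (σ * τ) • v + y := by
    rw [hv, smul_smul]
    have : σ * τ * (1 / τ) = σ := by field_simp
    rw [this]; module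
  rw [hz] at hstage1 hstage2
  rw [hy'] at hstage2
  simp only [mulVec_add, mulVec_smul] at hstage1 hstage2 ⊢
  -- key: B *ᵥ u = (B + (σ*τ) • A₂) *ᵥ v
  have hkey : B *ᵥ u = (B + (σ * τ) • A₂) *ᵥ v := by
    simp only [add_mulVec, smul_mulVec]
    have h := hstage1.trans hstage2.symm
    linear_combination h
  have hfac : ((B + (σ * τ) • A₁) * B⁻¹ * (B + (σ * τ) • A₂)) *ᵥ v
      = (B + (σ * τ) • A₁) *ᵥ u := by
    rw [Matrix.mul_assoc, ← mulVec_mulVec, ← mulVec_mulVec, ← hkey,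
      mulVec_mulVec, mulVec_mulVec,
      Matrix.nonsing_inv_mul_cancel_right (A := B) _ ((Matrix.isUnit_iff_isUnit_det B).mp hB)]
  rw [hfac]
  simp only [add_mulVec, smul_mulVec]
  linear_combination hstage1
end

section
/- Let n ≥ 1, let B and A be symmetric real n×n matrices with B positive definite and A positive definite, let τ > 0 and σ ∈ ℝ. Assume the matrix B + (σ − 1/2) τ A is positive semidefinite. If vectors y, y' ∈ ℝⁿ satisfy the weighted scheme B((y' − y)/τ) + A(σ y' + (1−σ) y) = 0, then ‖y'‖_A ≤ ‖y‖_A, where ‖x‖_A = √(xᵀ A x). -/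
open Matrix

/-- The `A`-weighted norm `‖x‖_A = √(xᵀ A x)`. -/
noncomputable def normA {n : ℕ} (A : Matrix (Fin n) (Fin n) ℝ) (x : Fin n → ℝ) : ℝ :=
  Real.sqrt (x ⬝ᵥ A *ᵥ x)

/-!
Energy method. With `w = y' - y`, the scheme's average `σ y' + (1 - σ) y` equals
`(y + y')/2 + (σ - 1/2) w`, and for symmetric `A` one has `w ⬝ A (y + y') = y'ᵀ A y' - yᵀ A y`.
Taking the scalar product of the scheme with `w` therefore gives
`τ (y'ᵀ A y' - yᵀ A y) = -2 wᵀ (B + (σ - 1/2) τ A) w`, whose right-hand side is `≤ 0`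
by the stability condition.
-/

namespace Matrix

variable {ι R : Type*} [Fintype ι]

theorem IsSymm.dotProduct_mulVec_comm_s8 [CommSemiring R] {A : Matrix ι ι R} (hA : A.IsSymm)
    (u v : ι → R) : u ⬝ᵥ A *ᵥ v = v ⬝ᵥ A *ᵥ u := by
  rw [dotProduct_mulVec, ← mulVec_transpose, hA.eq, dotProduct_comm]

theorem IsSymm.sub_dotProduct_mulVec_add [CommRing R] {A : Matrix ι ι R} (hA : A.IsSymm)
    (u v : ι → R) : (u - v) ⬝ᵥ A *ᵥ (u + v) = u ⬝ᵥ A *ᵥ u - v ⬝ᵥ A *ᵥ v := by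
  rw [mulVec_add, dotProduct_add, sub_dotProduct, sub_dotProduct, hA.dotProduct_mulVec_comm_s8 v u]
  ring

end Matrix

section WeightedScheme

variable {ι K : Type*} [Fintype ι] [Field K] [CharZero K]

theorem weighted_scheme_energy_identity {B A : Matrix ι ι K} (hA : A.IsSymm) {τ σ : K}
    (hτ : τ ≠ 0) {y y' : ι → K}
    (hscheme : B *ᵥ ((1 / τ) • (y' - y)) + A *ᵥ (σ • y' + (1 - σ) • y) = 0) :
    τ * (y' ⬝ᵥ A *ᵥ y' - y ⬝ᵥ A *ᵥ y) =
      -2 * ((y' - y) ⬝ᵥ (B + ((σ - 1 / 2) * τ) • A) *ᵥ (y' - y)) := by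
  have haverage : σ • y' + (1 - σ) • y = (1 / 2 : K) • (y' + y) + (σ - 1 / 2) • (y' - y) := by
    ext i
    simp only [Pi.add_apply, Pi.smul_apply, Pi.sub_apply, smul_eq_mul]
    ring
  have htested := congrArg ((y' - y) ⬝ᵥ ·) hscheme
  simp only [haverage, mulVec_add, mulVec_smul, dotProduct_add, dotProduct_smul, smul_eq_mul,
    dotProduct_zero] at htested
  have hdifference := hA.sub_dotProduct_mulVec_add y' y
  rw [mulVec_add, dotProduct_add] at hdifference
  rw [add_mulVec, smul_mulVec, dotProduct_add, dotProduct_smul, smul_eq_mul]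
  field_simp at htested ⊢
  linear_combination htested - τ * hdifference

end WeightedScheme

theorem weighted_scheme_stability_sufficiency_general
    {n : ℕ}
    (B A : Matrix (Fin n) (Fin n) ℝ)
    (hA : A.PosDef)
    (τ σ : ℝ) (hτ : 0 < τ)
    (hstab : (B + ((σ - 1 / 2) * τ) • A).PosSemidef)
    (y y' : Fin n → ℝ)
    (hscheme : B *ᵥ ((1 / τ) • (y' - y)) + A *ᵥ (σ • y' + (1 - σ) • y) = 0) :
    normA A y' ≤ normA A y := by
  have hsymm : A.IsSymm := isHermitian_iff_isSymm.mp hA.isHermitian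
  have henergy := weighted_scheme_energy_identity hsymm hτ.ne' hscheme
  have hform := hstab.dotProduct_mulVec_nonneg (y' - y)
  have hdecay : y' ⬝ᵥ A *ᵥ y' ≤ y ⬝ᵥ A *ᵥ y := by
    simp only [star_trivial] at hform
    nlinarith
  exact Real.sqrt_le_sqrt hdecay

theorem weighted_scheme_stability_sufficiency
    {n : ℕ} (hn : 1 ≤ n)
    (B A : Matrix (Fin n) (Fin n) ℝ)
    (hB : B.PosDef) (hA : A.PosDef)
    (τ σ : ℝ) (hτ : 0 < τ)
    (hstab : (B + ((σ - 1 / 2) * τ) • A).PosSemidef)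
    (y y' : Fin n → ℝ)
    (hscheme : B *ᵥ ((1 / τ) • (y' - y)) + A *ᵥ (σ • y' + (1 - σ) • y) = 0) :
    normA A y' ≤ normA A y :=
  weighted_scheme_stability_sufficiency_general B A hA τ σ hτ hstab y y' hscheme
end

section
/- Let n ≥ 1, let B and A be symmetric real n×n matrices with B positive definite and A positive definite, let τ > 0 and σ ∈ ℝ, and assume B + στA is invertible. Suppose that for every y ∈ ℝⁿ the unique y' ∈ ℝⁿ satisfying B((y' − y)/τ) + A(σ y' + (1−σ) y) = 0 obeys ‖y'‖_A ≤ ‖y‖_A, where ‖x‖_A = √(xᵀ A x). Then the matrix B + (σ − 1/2) τ A is positive semidefinite. -/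
/-!
Pairing one step of the scheme with its increment `w = y' - y` gives the energy identity
`‖y‖²_A - ‖y'‖²_A = (2/τ) ((B + (σ - 1/2) τ A) w, w)`. Since `A` is invertible, every `w` is the
increment of some step (solve the scheme for `y`), so stability makes this form nonnegative.
-/

open Matrix

lemma normA_le_normA_iff {n : ℕ} {A : Matrix (Fin n) (Fin n) ℝ} (hA : A.PosSemidef)
    (x y : Fin n → ℝ) : normA A x ≤ normA A y ↔ x ⬝ᵥ A *ᵥ x ≤ y ⬝ᵥ A *ᵥ y :=
  Real.sqrt_le_sqrt_iff (by simpa using hA.dotProduct_mulVec_nonneg y)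

namespace Matrix

variable {ι : Type*} [Fintype ι]

lemma IsSymm.add_dotProduct_mulVec_add {R : Type*} [CommRing R] {A : Matrix ι ι R}
    (hA : A.IsSymm) (y v : ι → R) :
    (y + v) ⬝ᵥ A *ᵥ (y + v) = y ⬝ᵥ A *ᵥ y + 2 * (v ⬝ᵥ A *ᵥ y) + v ⬝ᵥ A *ᵥ v := by
  have hsymm : y ⬝ᵥ A *ᵥ v = v ⬝ᵥ A *ᵥ y := by
    rw [← dotProduct_transpose_mulVec, hA.eq]
  rw [mulVec_add, dotProduct_add, add_dotProduct, add_dotProduct, hsymm]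
  ring

end Matrix

section WeightedScheme

variable {ι : Type*} [Fintype ι]

def IsWeightedStep (B A : Matrix ι ι ℝ) (τ σ : ℝ) (y y' : ι → ℝ) : Prop :=
  B *ᵥ ((1 / τ) • (y' - y)) + A *ᵥ (σ • y' + (1 - σ) • y) = 0

lemma exists_isWeightedStep_add [DecidableEq ι] (B : Matrix ι ι ℝ) {A : Matrix ι ι ℝ}
    (hA : IsUnit A) (τ σ : ℝ) (v : ι → ℝ) : ∃ y, IsWeightedStep B A τ σ y (y + v) := by
  obtain ⟨y, hy⟩ := mulVec_surjective_iff_isUnit.mpr hA (-(B *ᵥ ((1 / τ) • v) + σ • A *ᵥ v))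
  refine ⟨y, ?_⟩
  have hmid : σ • (y + v) + (1 - σ) • y = y + σ • v := by module
  rw [IsWeightedStep, add_sub_cancel_left, hmid, mulVec_add, hy]
  simp only [mulVec_smul]
  abel

lemma IsWeightedStep.energy_identity {B A : Matrix ι ι ℝ} {τ σ : ℝ} {y y' : ι → ℝ}
    (h : IsWeightedStep B A τ σ y y') (hA : A.IsSymm) (hτ : τ ≠ 0) :
    y ⬝ᵥ A *ᵥ y - y' ⬝ᵥ A *ᵥ y' =
      2 / τ * ((y' - y) ⬝ᵥ (B + ((σ - 1 / 2) * τ) • A) *ᵥ (y' - y)) := by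
  obtain ⟨w, rfl⟩ : ∃ w, y' = y + w := ⟨y' - y, by abel⟩
  rw [add_sub_cancel_left]
  have hmid : σ • (y + w) + (1 - σ) • y = y + σ • w := by module
  have hcross : w ⬝ᵥ A *ᵥ y = -(1 / τ) * (w ⬝ᵥ B *ᵥ w) - σ * (w ⬝ᵥ A *ᵥ w) := by
    rw [IsWeightedStep, add_sub_cancel_left, hmid] at h
    have := congrArg (w ⬝ᵥ ·) h
    simp only [mulVec_add, mulVec_smul, dotProduct_add, dotProduct_smul,
      smul_eq_mul, dotProduct_zero] at this
    linarith
  rw [hA.add_dotProduct_mulVec_add, hcross, add_mulVec, smul_mulVec, dotProduct_add,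
    dotProduct_smul, smul_eq_mul]
  field_simp
  ring

end WeightedScheme

theorem weighted_scheme_stability_necessity_general
    {n : ℕ}
    (B A : Matrix (Fin n) (Fin n) ℝ)
    (hB : B.PosDef) (hA : A.PosDef)
    (τ σ : ℝ) (hτ : 0 < τ)
    (hstable : ∀ y y' : Fin n → ℝ,
      B *ᵥ ((1 / τ) • (y' - y)) + A *ᵥ (σ • y' + (1 - σ) • y) = 0 →
        normA A y' ≤ normA A y) :
    (B + ((σ - 1 / 2) * τ) • A).PosSemidef := by
  refine PosSemidef.of_dotProduct_mulVec_nonneg (hB.1.add (hA.1.smul (.all _))) fun v => ?_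
  obtain ⟨y, hstep⟩ := exists_isWeightedStep_add B hA.isUnit τ σ v
  have hdecay := (normA_le_normA_iff hA.posSemidef _ _).mp (hstable y (y + v) hstep)
  have henergy := hstep.energy_identity (isHermitian_iff_isSymm.mp hA.1) hτ.ne'
  rw [add_sub_cancel_left] at henergy
  have hnonneg : 0 ≤ 2 / τ * (v ⬝ᵥ (B + ((σ - 1 / 2) * τ) • A) *ᵥ v) := by linarith
  simpa using nonneg_of_mul_nonneg_right hnonneg (by positivity)

theorem weighted_scheme_stability_necessity
    {n : ℕ} (hn : 1 ≤ n)
    (B A : Matrix (Fin n) (Fin n) ℝ)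
    (hB : B.PosDef) (hA : A.PosDef)
    (τ σ : ℝ) (hτ : 0 < τ)
    (hinv : IsUnit (B + (σ * τ) • A))
    (hstable : ∀ y y' : Fin n → ℝ,
      B *ᵥ ((1 / τ) • (y' - y)) + A *ᵥ (σ • y' + (1 - σ) • y) = 0 →
        normA A y' ≤ normA A y) :
    (B + ((σ - 1 / 2) * τ) • A).PosSemidef :=
  weighted_scheme_stability_necessity_general B A hB hA τ σ hτ hstable
end

section
/- Let n ≥ 1 and let Ã₁, Ã₂ be symmetric positive semidefinite real n×n matrices, let Ã = Ã₁ + Ã₂, let τ > 0 and σ ≥ 1/2. If sequences v : ℕ → ℝⁿ and φ̃ : ℕ → ℝⁿ satisfy (I + στÃ₁)(I + στÃ₂)((v(k+1) − v(k))/τ) + Ã v(k) = φ̃(k) for every k ∈ ℕ, then for every N ∈ ℕ one has ‖(I + στÃ₂) v(N)‖ ≤ ‖(I + στÃ₂) v(0)‖ + τ Σ_{k=0}^{N−1} ‖φ̃(k)‖, where ‖·‖ is the Euclidean norm on ℝⁿ. -/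
open Matrix

namespace StabAux

variable {n : ℕ}

lemma dot_self_nonneg (x : Fin n → ℝ) : 0 ≤ x ⬝ᵥ x :=
  Finset.sum_nonneg fun i _ => mul_self_nonneg _

lemma euclNorm_nonneg (x : Fin n → ℝ) : 0 ≤ euclNorm x := Real.sqrt_nonneg _

lemma sq_euclNorm (x : Fin n → ℝ) : euclNorm x ^ 2 = x ⬝ᵥ x :=
  Real.sq_sqrt (dot_self_nonneg x)

lemma euclNorm_le_euclNorm {x y : Fin n → ℝ} (h : x ⬝ᵥ x ≤ y ⬝ᵥ y) :
    euclNorm x ≤ euclNorm y := Real.sqrt_le_sqrt h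

lemma dot_le (x y : Fin n → ℝ) : x ⬝ᵥ y ≤ euclNorm x * euclNorm y := by
  have h := Finset.sum_mul_sq_le_sq_mul_sq Finset.univ x y
  have hx : ∑ i, x i ^ 2 = x ⬝ᵥ x := by simp [dotProduct, sq]
  have hy : ∑ i, y i ^ 2 = y ⬝ᵥ y := by simp [dotProduct, sq]
  have hxy : ∑ i, x i * y i = x ⬝ᵥ y := rfl
  rw [hx, hy, hxy] at h
  calc x ⬝ᵥ y ≤ |x ⬝ᵥ y| := le_abs_self _
    _ = Real.sqrt ((x ⬝ᵥ y) ^ 2) := (Real.sqrt_sq_eq_abs _).symm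
    _ ≤ Real.sqrt ((x ⬝ᵥ x) * (y ⬝ᵥ y)) := Real.sqrt_le_sqrt h
    _ = euclNorm x * euclNorm y := Real.sqrt_mul (dot_self_nonneg x) _

lemma euclNorm_add_le (x y : Fin n → ℝ) :
    euclNorm (x + y) ≤ euclNorm x + euclNorm y := by
  have h1 : (x + y) ⬝ᵥ (x + y) = x ⬝ᵥ x + 2 * (x ⬝ᵥ y) + y ⬝ᵥ y := by
    rw [dotProduct_add, add_dotProduct, add_dotProduct, dotProduct_comm y x]; ring
  have h2 : euclNorm (x + y) ≤ Real.sqrt ((euclNorm x + euclNorm y) ^ 2) := by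
    apply Real.sqrt_le_sqrt
    rw [h1]
    have := dot_le x y
    nlinarith [sq_euclNorm x, sq_euclNorm y]
  calc euclNorm (x + y) ≤ Real.sqrt ((euclNorm x + euclNorm y) ^ 2) := h2
    _ = euclNorm x + euclNorm y :=
      Real.sqrt_sq (add_nonneg (euclNorm_nonneg x) (euclNorm_nonneg y))

lemma euclNorm_smul (t : ℝ) (x : Fin n → ℝ) :
    euclNorm (t • x) = |t| * euclNorm x := by
  unfold euclNorm
  rw [smul_dotProduct, dotProduct_smul, smul_eq_mul, smul_eq_mul, ← mul_assoc,
    ← sq, Real.sqrt_mul (sq_nonneg t), Real.sqrt_sq_eq_abs]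

lemma psd_nn {M : Matrix (Fin n) (Fin n) ℝ} (hM : M.PosSemidef) (x : Fin n → ℝ) :
    0 ≤ x ⬝ᵥ (M *ᵥ x) := by
  simpa using hM.re_dotProduct_nonneg x

lemma symm_dot {M : Matrix (Fin n) (Fin n) ℝ} (hM : M.IsHermitian)
    (x y : Fin n → ℝ) : (M *ᵥ x) ⬝ᵥ y = x ⬝ᵥ (M *ᵥ y) := by
  have ht : Mᵀ = M := by
    rw [← conjTranspose_eq_transpose_of_trivial]; exact hM
  rw [dotProduct_mulVec x M y, ← mulVec_transpose, ht, dotProduct_comm]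

/-- `‖u‖ ≤ ‖(1+s•M)u‖` for `M` PSD, `s ≥ 0`. -/
lemma norm_le_mulVec {M : Matrix (Fin n) (Fin n) ℝ} (hM : M.PosSemidef)
    {s : ℝ} (hs : 0 ≤ s) (u : Fin n → ℝ) :
    euclNorm u ≤ euclNorm ((1 + s • M) *ᵥ u) := by
  set z := (1 + s • M) *ᵥ u with hz
  have hzu : u ⬝ᵥ z = u ⬝ᵥ u + s * (u ⬝ᵥ (M *ᵥ u)) := by
    rw [hz, add_mulVec, one_mulVec, smul_mulVec, dotProduct_add,
      dotProduct_smul, smul_eq_mul]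
  have h1 : u ⬝ᵥ u ≤ u ⬝ᵥ z := by
    have := mul_nonneg hs (psd_nn hM u)
    linarith
  have h2 : u ⬝ᵥ z ≤ euclNorm u * euclNorm z := dot_le u z
  have h3 : euclNorm u ^ 2 ≤ euclNorm u * euclNorm z := by
    rw [sq_euclNorm]; linarith
  rcases eq_or_lt_of_le (euclNorm_nonneg u) with h | h
  · rw [← h]; exact euclNorm_nonneg z
  · nlinarith

/-- Injectivity of `w ↦ (1+s•M) *ᵥ w`. -/
lemma inj_mulVec {M : Matrix (Fin n) (Fin n) ℝ} (hM : M.PosSemidef)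
    {s : ℝ} (hs : 0 ≤ s) :
    Function.Injective ((1 + s • M).mulVecLin) := by
    rw [injective_iff_map_eq_zero]
    intro w hw
    have hw' : (1 + s • M) *ᵥ w = 0 := hw
    have h0 : w ⬝ᵥ ((1 + s • M) *ᵥ w) = 0 := by rw [hw', dotProduct_zero]
    have hzu : w ⬝ᵥ ((1 + s • M) *ᵥ w) = w ⬝ᵥ w + s * (w ⬝ᵥ (M *ᵥ w)) := by
      rw [add_mulVec, one_mulVec, smul_mulVec, dotProduct_add,
        dotProduct_smul, smul_eq_mul]
    have h1 : w ⬝ᵥ w = 0 := by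
      have h2 := mul_nonneg hs (psd_nn hM w)
      have h3 := dot_self_nonneg w
      linarith [hzu ▸ h0]
    exact dotProduct_self_eq_zero.mp h1
/-- Surjectivity of `w ↦ (1+s•M) *ᵥ w`. -/
lemma surj_mulVec {M : Matrix (Fin n) (Fin n) ℝ} (hM : M.PosSemidef)
    {s : ℝ} (hs : 0 ≤ s) (y : Fin n → ℝ) :
    ∃ w, (1 + s • M) *ᵥ w = y := by
  obtain ⟨w, hw⟩ := (LinearMap.injective_iff_surjective).mp (inj_mulVec hM hs) y
  exact ⟨w, hw⟩

end StabAux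

namespace StabAux
variable {n : ℕ}

/-- Core SOS estimate: if `(1+στA₁) d = τ (A₁+A₂) x` then
`‖(1+στA₂)x − d‖ ≤ ‖(1+στA₂)x‖`. -/
lemma step_key {A₁ A₂ : Matrix (Fin n) (Fin n) ℝ}
    (hA₁ : A₁.PosSemidef) (hA₂ : A₂.PosSemidef)
    {τ σ : ℝ} (hτ : 0 < τ) (hσ : 1 / 2 ≤ σ)
    {x d : Fin n → ℝ}
    (hd : d + (σ * τ) • (A₁ *ᵥ d) = τ • ((A₁ + A₂) *ᵥ x)) :
    euclNorm ((1 + (σ * τ) • A₂) *ᵥ x - d) ≤ euclNorm ((1 + (σ * τ) • A₂) *ᵥ x) := by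
  set w := (1 + (σ * τ) • A₂) *ᵥ x with hw
  -- scalar abbreviations
  set p := d ⬝ᵥ d with hp
  set q := d ⬝ᵥ (A₁ *ᵥ d) with hq
  set b := d ⬝ᵥ (A₁ *ᵥ x) with hb
  set c := d ⬝ᵥ (A₂ *ᵥ x) with hc
  set g₁ := x ⬝ᵥ (A₁ *ᵥ x) with hg₁
  set g₂ := x ⬝ᵥ (A₂ *ᵥ x) with hg₂
  set a := x ⬝ᵥ d with ha
  -- constraint dotted with d
  have E1 : p + (σ * τ) * q = τ * b + τ * c := by
    have := congrArg (fun z => d ⬝ᵥ z) hd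
    simpa [dotProduct_add, dotProduct_smul, add_mulVec, smul_eq_mul, mul_add] using this
  -- constraint dotted with x
  have E2 : a + (σ * τ) * b = τ * g₁ + τ * g₂ := by
    have h := congrArg (fun z => x ⬝ᵥ z) hd
    have hsym : x ⬝ᵥ (A₁ *ᵥ d) = b := by
      rw [hb, ← symm_dot hA₁.1 d x, dotProduct_comm]
    simp only [dotProduct_add, dotProduct_smul, add_mulVec, smul_eq_mul, mul_add] at h
    rw [hsym] at h
    rw [ha, hg₁, hg₂]
    linarith
  -- SOS term
  have hsos : 0 ≤ g₁ - 2 * σ * b + σ ^ 2 * q := by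
    have h0 := psd_nn hA₁ (x - σ • d)
    have hexp : (x - σ • d) ⬝ᵥ (A₁ *ᵥ (x - σ • d))
        = g₁ - 2 * σ * b + σ ^ 2 * q := by
      rw [mulVec_sub, mulVec_smul, dotProduct_sub, sub_dotProduct, sub_dotProduct,
        dotProduct_smul, smul_dotProduct, smul_dotProduct, dotProduct_smul]
      have hs1 : x ⬝ᵥ (A₁ *ᵥ d) = b := by
        rw [hb, ← symm_dot hA₁.1 d x, dotProduct_comm]
      have hs2 : d ⬝ᵥ (A₁ *ᵥ x) = b := rfl
      rw [hs1]
      simp only [smul_eq_mul, hg₁, hq]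
      ring
    linarith [hexp ▸ h0]
  have hp0 : 0 ≤ p := dot_self_nonneg d
  have hg2 : 0 ≤ g₂ := psd_nn hA₂ x
  -- key inequality: 0 ≤ 2⟨w,d⟩ − p
  have hwd : w ⬝ᵥ d = a + (σ * τ) * c := by
    rw [hw, add_mulVec, one_mulVec, smul_mulVec, add_dotProduct,
      smul_dotProduct, smul_eq_mul, ha, hc, dotProduct_comm d (A₂ *ᵥ x)]
  have key : 0 ≤ 2 * (w ⬝ᵥ d) - p := by
    rw [hwd]
    have hiden : 2 * (a + (σ * τ) * c) - p
        = 2 * τ * g₂ + (2 * σ - 1) * p + 2 * τ * (g₁ - 2 * σ * b + σ ^ 2 * q) := by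
      linear_combination 2 * E2 - 2 * σ * E1
    rw [hiden]
    have t1 : 0 ≤ 2 * τ * g₂ := by positivity
    have t2 : 0 ≤ (2 * σ - 1) * p := mul_nonneg (by linarith) hp0
    have t3 : 0 ≤ 2 * τ * (g₁ - 2 * σ * b + σ ^ 2 * q) := by
      apply mul_nonneg (by linarith) hsos
    linarith
  -- conclude
  apply euclNorm_le_euclNorm
  have hexp : (w - d) ⬝ᵥ (w - d) = w ⬝ᵥ w - 2 * (w ⬝ᵥ d) + p := by
    rw [dotProduct_sub, sub_dotProduct, sub_dotProduct, dotProduct_comm d w, hp]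
    ring
  linarith [hexp]

end StabAux

namespace StabAux
variable {n : ℕ}

lemma per_step {A₁ A₂ : Matrix (Fin n) (Fin n) ℝ}
    (hA₁ : A₁.PosSemidef) (hA₂ : A₂.PosSemidef)
    {τ σ : ℝ} (hτ : 0 < τ) (hσ : 1 / 2 ≤ σ)
    (v₀ v₁ ψ : Fin n → ℝ)
    (hk : ((1 + (σ * τ) • A₁) * (1 + (σ * τ) • A₂)) *ᵥ ((1 / τ) • (v₁ - v₀))
      + (A₁ + A₂) *ᵥ v₀ = ψ) :
    euclNorm ((1 + (σ * τ) • A₂) *ᵥ v₁)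
      ≤ euclNorm ((1 + (σ * τ) • A₂) *ᵥ v₀) + τ * euclNorm ψ := by
  have hσ0 : (0 : ℝ) ≤ σ := le_trans (by norm_num) hσ
  have hs : (0 : ℝ) ≤ σ * τ := mul_nonneg hσ0 hτ.le
  have hτne : (τ : ℝ) ≠ 0 := ne_of_gt hτ
  set C := 1 + (σ * τ) • A₁ with hC
  set B := 1 + (σ * τ) • A₂ with hB
  obtain ⟨d, hd⟩ := surj_mulVec hA₁ hs (τ • ((A₁ + A₂) *ᵥ v₀))
  obtain ⟨e, he⟩ := surj_mulVec hA₁ hs ψ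
  -- the scheme rewritten
  have hY : C *ᵥ (B *ᵥ v₁) - C *ᵥ (B *ᵥ v₀) = τ • ψ - τ • ((A₁ + A₂) *ᵥ v₀) := by
    have h1 : (C * B) *ᵥ ((1 / τ) • (v₁ - v₀))
        = (1 / τ) • ((C * B) *ᵥ (v₁ - v₀)) := mulVec_smul _ _ _
    rw [h1] at hk
    have h2 : (C * B) *ᵥ (v₁ - v₀) = τ • ψ - τ • ((A₁ + A₂) *ᵥ v₀) := by
      have h3 : (1 / τ) • ((C * B) *ᵥ (v₁ - v₀)) = ψ - (A₁ + A₂) *ᵥ v₀ :=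
        eq_sub_of_add_eq hk
      have h4 := congrArg (fun z => τ • z) h3
      simp only [smul_smul, smul_sub] at h4
      rw [mul_one_div, div_self hτne, one_smul] at h4
      exact h4
    rw [mulVec_sub, ← mulVec_mulVec, ← mulVec_mulVec] at h2
    exact h2
  have hmain : B *ᵥ v₁ = (B *ᵥ v₀ - d) + τ • e := by
    apply inj_mulVec hA₁ hs
    show C *ᵥ (B *ᵥ v₁) = C *ᵥ ((B *ᵥ v₀ - d) + τ • e)
    rw [mulVec_add, mulVec_sub, mulVec_smul, hd, he]
    have := hY
    funext i
    have h5 := congrFun hY i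
    simp only [Pi.sub_apply, Pi.add_apply, Pi.smul_apply, smul_eq_mul] at h5 ⊢
    linarith
  -- estimate
  have hkey : euclNorm (B *ᵥ v₀ - d) ≤ euclNorm (B *ᵥ v₀) := by
    apply step_key hA₁ hA₂ hτ hσ
    have : C *ᵥ d = d + (σ * τ) • (A₁ *ᵥ d) := by
      rw [hC, add_mulVec, one_mulVec, smul_mulVec]
    rw [← this, hd]
  have hphi : euclNorm e ≤ euclNorm ψ := by
    have := norm_le_mulVec hA₁ hs e
    rwa [← hC, he] at this
  calc euclNorm (B *ᵥ v₁) = euclNorm ((B *ᵥ v₀ - d) + τ • e) := by rw [hmain]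
    _ ≤ euclNorm (B *ᵥ v₀ - d) + euclNorm (τ • e) := euclNorm_add_le _ _
    _ = euclNorm (B *ᵥ v₀ - d) + τ * euclNorm e := by
        rw [euclNorm_smul, abs_of_pos hτ]
    _ ≤ euclNorm (B *ᵥ v₀) + τ * euclNorm ψ := by
        have := mul_le_mul_of_nonneg_left hphi hτ.le
        linarith

end StabAux

theorem symmetrized_factorized_scheme_multi_level_stability
    {n : ℕ} (hn : 1 ≤ n)
    (A₁ A₂ : Matrix (Fin n) (Fin n) ℝ)
    (hA₁ : A₁.PosSemidef) (hA₂ : A₂.PosSemidef)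
    (A : Matrix (Fin n) (Fin n) ℝ) (hA : A = A₁ + A₂)
    (τ σ : ℝ) (hτ : 0 < τ) (hσ : 1 / 2 ≤ σ)
    (v φ : ℕ → Fin n → ℝ)
    (hscheme : ∀ k : ℕ,
      ((1 + (σ * τ) • A₁) * (1 + (σ * τ) • A₂)) *ᵥ ((1 / τ) • (v (k + 1) - v k))
        + A *ᵥ v k = φ k) :
    ∀ N : ℕ,
      euclNorm ((1 + (σ * τ) • A₂) *ᵥ v N)
        ≤ euclNorm ((1 + (σ * τ) • A₂) *ᵥ v 0)
          + τ * ∑ k ∈ Finset.range N, euclNorm (φ k) := by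
  intro N
  induction N with
  | zero => simp
  | succ N ih =>
    have hstep := StabAux.per_step hA₁ hA₂ hτ hσ (v N) (v (N + 1)) (φ N)
      (by rw [← hA]; exact hscheme N)
    rw [Finset.sum_range_succ, mul_add]
    linarith
end
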